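/- arXiv:2504.07725 — 2 statements merged into one kernel-verified Lean document; each statement's English description precedes it below -/
import Mathlib

section
/- Let k ≥ 2 be an integer and consider a process on an integer state m starting at m = k and ending when m = 1, where each step picks some j with 2 ≤ j ≤ m, pays cost at most (j/m)·OPT, and replaces m by m - j + 1. Then the total cost paid over all steps is at most 2·OPT·ln k. -/
open Finset

/-!
Take `2 · OPT · log m` as potential. A step merging `j` of the `m` components leaves
`m' = m - j + 1`, and `log m - log m' ≥ 1 - m'/m = (j - 1)/m ≥ j/(2m)` because `j ≥ 2`;
so each step costs at most the drop of the potential, and the costs telescope to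
`2 · OPT · (log k - log 1)`.
-/

lemma Real.one_sub_div_le_log_sub_log {x y : ℝ} (hx : 0 < x) (hy : 0 < y) :
    1 - y / x ≤ Real.log x - Real.log y := by
  have h := Real.one_sub_inv_le_log_of_pos (div_pos hx hy)
  rwa [inv_div, Real.log_div hx.ne' hy.ne'] at h

lemma div_le_two_mul_log_sub_log_sub_add_one {m j : ℕ} (hj : 2 ≤ j) (hjm : j ≤ m) :
    (j : ℝ) / m ≤ 2 * (Real.log m - Real.log ((m - j + 1 : ℕ) : ℝ)) := by
  have hm : (0 : ℝ) < m := by exact_mod_cast (by omega : 0 < m)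
  have hj' : (2 : ℝ) ≤ j := by exact_mod_cast hj
  have hcast : ((m - j + 1 : ℕ) : ℝ) = m - j + 1 := by push_cast [Nat.cast_sub hjm]; ring
  calc (j : ℝ) / m ≤ 2 * (1 - ((m - j + 1 : ℕ) : ℝ) / m) := by
        rw [hcast, one_sub_div hm.ne', mul_div_assoc', div_le_div_iff_of_pos_right hm]
        linarith
    _ ≤ 2 * (Real.log m - Real.log ((m - j + 1 : ℕ) : ℝ)) := by
        gcongr 2 * ?_
        exact Real.one_sub_div_le_log_sub_log hm (by positivity)

theorem stmt_14_general (OPT : ℝ) (hOPT : 0 < OPT) (k : ℕ)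
    (T : ℕ) (m j : ℕ → ℕ) (cost : ℕ → ℝ)
    (hm0 : m 0 = k) (hmT : m T = 1)
    (hstep : ∀ s < T, 2 ≤ j s ∧ j s ≤ m s ∧
      cost s ≤ ((j s : ℝ) / (m s : ℝ)) * OPT ∧ m (s + 1) = m s - j s + 1) :
    ∑ s ∈ Finset.range T, cost s ≤ 2 * OPT * Real.log k := by
  have hstep_le : ∀ s ∈ range T,
      cost s ≤ 2 * OPT * (Real.log (m s) - Real.log (m (s + 1))) := by
    intro s hs
    obtain ⟨hj, hjm, hcost, hm⟩ := hstep s (mem_range.mp hs)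
    calc cost s ≤ (j s : ℝ) / m s * OPT := hcost
      _ ≤ 2 * (Real.log (m s) - Real.log (m (s + 1))) * OPT := by
          rw [hm]
          gcongr
          exact div_le_two_mul_log_sub_log_sub_add_one hj hjm
      _ = 2 * OPT * (Real.log (m s) - Real.log (m (s + 1))) := by ring
  calc ∑ s ∈ range T, cost s
      ≤ ∑ s ∈ range T, 2 * OPT * (Real.log (m s) - Real.log (m (s + 1))) :=
        sum_le_sum hstep_le
    _ = 2 * OPT * Real.log k := by
        rw [← mul_sum, sum_range_sub' (fun s => Real.log (m s)), hm0, hmT]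
        simp

/-- Potential-function lemma: a process starting at m = k, each step merging j
components (2 ≤ j ≤ m) at cost at most (j/m)·OPT and replacing m by m - j + 1,
ending at m = 1, pays total cost at most 2·OPT·ln k. -/
theorem stmt_14 (OPT : ℝ) (hOPT : 0 < OPT) (k : ℕ) (hk : 2 ≤ k)
    (T : ℕ) (m j : ℕ → ℕ) (cost : ℕ → ℝ)
    (hm0 : m 0 = k) (hmT : m T = 1)
    (hstep : ∀ s < T, 2 ≤ j s ∧ j s ≤ m s ∧
      cost s ≤ ((j s : ℝ) / (m s : ℝ)) * OPT ∧ m (s + 1) = m s - j s + 1)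
    (hcost : ∀ s, 0 ≤ cost s) :
    ∑ s ∈ Finset.range T, cost s ≤ 2 * OPT * Real.log k :=
  stmt_14_general OPT hOPT k T m j cost hm0 hmT hstep
end

section
/- Let X be a finite set, y : X → [1/|X|², 1], p : X → ℝ≥0 with Σ_x y(x)p(x) = OPT, and let k = ⌈2 log₂|X|⌉ + 1 with dyadic buckets Z_i = {x : 1/2^i < y(x) ≤ 1/2^{i-1}}. Split Z into Z_A = ∪_{i ≤ ⌊log₂ log₂ |X|⌋} Z_i and Z_B = Z \ Z_A. Then either (a) Σ_{x∈Z_A} y(x)p(x) ≥ OPT/2 and every x ∈ Z_A has y(x) ≥ 1/log₂|X|, or (b) there exists i with ⌊log₂ log₂ |X|⌋ < i ≤ k such that Σ_{x∈Z_i} y(x)p(x) ≥ OPT/(4 log₂|X|) and consequently Σ_{x∈Z_i} p(x) ≥ 2^{i-1}·OPT/(4 log₂|X|) ≥ OPT/8 (for |X| sufficiently large). -/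
open Finset

/-- The dyadic capacity bucket `Z_i = {x ∈ X : 1/2^i < y x ≤ 1/2^(i-1)}`. -/
def bucket {ι : Type*} (X : Finset ι) (y : ι → ℝ) (i : ℕ) : Set ι :=
  {x | x ∈ X ∧ 1 / (2 : ℝ) ^ i < y x ∧ y x ≤ 1 / (2 : ℝ) ^ (i - 1)}

set_option maxHeartbeats 1000000 in
/-- Case analysis on dyadic buckets: either the high-capacity part `Z_A` (the
buckets with index at most ⌊log₂ log₂ |X|⌋) carries half of the fractional
prize and all its capacities are at least 1/log₂|X|, or a single low bucket
carries an Ω(1/log|X|) fraction of it, and then its total prize is at least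
OPT/8. -/
theorem stmt_16 {ι : Type*} (X : Finset ι) (y p : ι → ℝ)
    (hy : ∀ x ∈ X, 1 / ((X.card : ℝ)) ^ 2 ≤ y x ∧ y x ≤ 1)
    (hp : ∀ x ∈ X, 0 ≤ p x)
    (OPT : ℝ) (hOPT : OPT = ∑ x ∈ X, y x * p x)
    (hlarge : 16 ≤ X.card) :
    (∑ᶠ x ∈ {x | x ∈ X ∧
        1 / (2 : ℝ) ^ (⌊Real.logb 2 (Real.logb 2 (X.card : ℝ))⌋₊) < y x},
        y x * p x ≥ OPT / 2 ∧
      ∀ x ∈ X,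
        1 / (2 : ℝ) ^ (⌊Real.logb 2 (Real.logb 2 (X.card : ℝ))⌋₊) < y x →
          y x ≥ 1 / Real.logb 2 (X.card : ℝ)) ∨
    (∃ i : ℕ, ⌊Real.logb 2 (Real.logb 2 (X.card : ℝ))⌋₊ < i ∧
        i ≤ ⌈2 * Real.logb 2 (X.card : ℝ)⌉₊ + 1 ∧
        ∑ᶠ x ∈ bucket X y i, y x * p x ≥ OPT / (4 * Real.logb 2 (X.card : ℝ)) ∧
        ∑ᶠ x ∈ bucket X y i, p x ≥
          2 ^ (i - 1) * OPT / (4 * Real.logb 2 (X.card : ℝ)) ∧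
        ∑ᶠ x ∈ bucket X y i, p x ≥ OPT / 8) := by
  classical
  set n : ℝ := (X.card : ℝ) with hn
  have hn16 : (16:ℝ) ≤ n := by rw [hn]; exact_mod_cast hlarge
  have hn0 : (0:ℝ) < n := by linarith
  set t : ℝ := Real.logb 2 n with ht
  have h12 : (1:ℝ) < 2 := one_lt_two
  have h16eq : (16:ℝ) = (2:ℝ) ^ (4:ℝ) := by
    rw [show (4:ℝ) = ((4:ℕ):ℝ) by norm_num, Real.rpow_natCast]; norm_num
  have ht4 : (4:ℝ) ≤ t := by
    have h1 : Real.logb 2 16 ≤ t :=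
      Real.logb_le_logb_of_le (by norm_num) (by norm_num) hn16
    have h2 : Real.logb 2 16 = 4 := by
      rw [h16eq, Real.logb_rpow (by norm_num) (by norm_num)]
    linarith
  have ht0 : (0:ℝ) < t := by linarith
  have hlogt : (2:ℝ) ≤ Real.logb 2 t := by
    have h1 : Real.logb 2 4 ≤ Real.logb 2 t :=
      Real.logb_le_logb_of_le (by norm_num) (by norm_num) ht4
    have h2 : Real.logb 2 4 = 2 := by
      rw [show (4:ℝ) = (2:ℝ) ^ (2:ℝ) by
        rw [show (2:ℝ) = ((2:ℕ):ℝ) by norm_num, Real.rpow_natCast]; norm_num,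
        Real.logb_rpow (by norm_num) (by norm_num)]
    linarith
  set m : ℕ := ⌊Real.logb 2 t⌋₊ with hm
  have hm2 : 2 ≤ m := by
    exact Nat.le_floor (by exact_mod_cast hlogt)
  have hrpow_nat : ∀ j : ℕ, (2:ℝ) ^ (j:ℝ) = (2:ℝ) ^ j := fun j =>
    Real.rpow_natCast 2 j
  have h2m_le_t : (2:ℝ) ^ m ≤ t := by
    have h1 : (m:ℝ) ≤ Real.logb 2 t := Nat.floor_le (by linarith [hlogt])
    have h2 : (2:ℝ) ^ (m:ℝ) ≤ (2:ℝ) ^ (Real.logb 2 t) :=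
      Real.rpow_le_rpow_of_exponent_le (by norm_num) h1
    rw [hrpow_nat] at h2
    rwa [Real.rpow_logb (by norm_num) (by norm_num) ht0] at h2
  have ht_lt : t < 2 * (2:ℝ) ^ m := by
    have h1 : Real.logb 2 t < (m:ℝ) + 1 := Nat.lt_floor_add_one _
    have h2 : (2:ℝ) ^ (Real.logb 2 t) < (2:ℝ) ^ ((m:ℝ) + 1) :=
      Real.rpow_lt_rpow_of_exponent_lt (by norm_num) h1
    rw [Real.rpow_logb (by norm_num) (by norm_num) ht0] at h2
    have h3 : (2:ℝ) ^ ((m:ℝ) + 1) = 2 * (2:ℝ) ^ m := by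
      rw [Real.rpow_add (by norm_num), Real.rpow_one, hrpow_nat]; ring
    linarith [h2, h3.le]
  set k : ℕ := ⌈2 * t⌉₊ + 1 with hk
  have hk_ge : 2 * t ≤ (⌈2 * t⌉₊ : ℝ) := Nat.le_ceil _
  have hk_le : (k:ℝ) ≤ 2 * t + 2 := by
    have := Nat.ceil_lt_add_one (show (0:ℝ) ≤ 2 * t by linarith)
    push_cast [hk]
    linarith
  have hmk : m < k := by
    have h0 : (m:ℝ) ≤ (2:ℝ) ^ m := by
      exact_mod_cast Nat.le_of_lt (Nat.lt_two_pow_self (n := m))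
    have h1 : (m:ℝ) ≤ t := le_trans h0 h2m_le_t
    have h2 : (m:ℝ) < (k:ℝ) := by push_cast [hk]; linarith [hk_ge]
    exact_mod_cast h2
  -- every x has 1/2^k < y x
  have hn2_lt : n ^ 2 < (2:ℝ) ^ k := by
    have h1 : n = (2:ℝ) ^ (t:ℝ) := by
      rw [ht, Real.rpow_logb (by norm_num) (by norm_num) hn0]
    have h2 : n ^ 2 = (2:ℝ) ^ (2 * t) := by
      rw [h1, ← Real.rpow_natCast ((2:ℝ)^(t:ℝ)) 2, ← Real.rpow_mul (by norm_num)]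
      norm_num; ring_nf
    have h3 : 2 * t < (k:ℝ) := by
      push_cast [hk]; linarith [hk_ge]
    have h4 : (2:ℝ) ^ (2*t) < (2:ℝ) ^ ((k:ℝ)) :=
      Real.rpow_lt_rpow_of_exponent_lt (by norm_num) h3
    rw [hrpow_nat] at h4
    linarith [h2.le]
  have hy_pos : ∀ x ∈ X, 0 < y x := fun x hx => lt_of_lt_of_le
    (by positivity) (hy x hx).1
  have hterm_nonneg : ∀ x ∈ X, 0 ≤ y x * p x := fun x hx =>
    mul_nonneg (hy_pos x hx).le (hp x hx)
  set A : Finset ι := X.filter (fun x => 1 / (2:ℝ) ^ m < y x) with hA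
  set B : ℕ → Finset ι := fun i =>
    X.filter (fun x => 1 / (2:ℝ) ^ i < y x ∧ y x ≤ 1 / (2:ℝ) ^ (i-1)) with hB
  have hAset : {x | x ∈ X ∧ 1 / (2:ℝ) ^ m < y x} = (↑A : Set ι) := by
    ext x; simp [hA]
  have hBset : ∀ i, bucket X y i = (↑(B i) : Set ι) := by
    intro i; ext x; simp [bucket, hB]
  by_cases hcase : OPT / 2 ≤ ∑ x ∈ A, y x * p x
  · left
    constructor
    · rw [hAset, finsum_mem_coe_finset]; exact hcase
    · intro x hx hxy
      have h1 : 1 / t ≤ 1 / (2:ℝ) ^ m := by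
        apply one_div_le_one_div_of_le (by positivity) h2m_le_t
      linarith
  · right
    push_neg at hcase
    have hOPTpos : 0 < OPT := by
      have h0 : 0 ≤ ∑ x ∈ A, y x * p x :=
        Finset.sum_nonneg fun x hx => hterm_nonneg x (Finset.mem_filter.mp hx).1
      linarith
    set C : Finset ι := X.filter (fun x => ¬ (1 / (2:ℝ) ^ m < y x)) with hC
    have hsplit : ∑ x ∈ A, y x * p x + ∑ x ∈ C, y x * p x = OPT := by
      rw [hOPT]; exact Finset.sum_filter_add_sum_filter_not X _ _
    have hCge : OPT / 2 < ∑ x ∈ C, y x * p x := by linarith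
    -- C is covered by buckets m+1..k
    have hcover : ∀ x ∈ C, ∃ i ∈ Finset.Ioc m k, x ∈ B i := by
      intro x hx
      obtain ⟨hxX, hxle⟩ := Finset.mem_filter.mp hx
      push_neg at hxle
      have hyk : 1 / (2:ℝ) ^ k < y x := by
        have h1 : 1 / (2:ℝ) ^ k < 1 / n ^ 2 :=
          one_div_lt_one_div_of_lt (by nlinarith) hn2_lt
        exact lt_of_lt_of_le h1 (hy x hxX).1
      have hP : ∃ j, 1 / (2:ℝ) ^ j < y x := ⟨k, hyk⟩
      set i := Nat.find hP with hi
      have hiP : 1 / (2:ℝ) ^ i < y x := Nat.find_spec hP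
      have hik : i ≤ k := Nat.find_min' hP hyk
      have him : m < i := by
        by_contra hle
        push_neg at hle
        have : 1 / (2:ℝ) ^ m ≤ 1 / (2:ℝ) ^ i := by
          apply one_div_le_one_div_of_le (by positivity)
          exact pow_le_pow_right₀ (by norm_num) hle
        linarith
      have hi1 : ¬ (1 / (2:ℝ) ^ (i-1) < y x) := by
        apply Nat.find_min hP
        omega
      push_neg at hi1
      exact ⟨i, Finset.mem_Ioc.mpr ⟨him, hik⟩, Finset.mem_filter.mpr ⟨hxX, hiP, hi1⟩⟩
    have hdisjgen : ∀ i j : ℕ, i < j → Disjoint (B i) (B j) := by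
      intro i j hlt
      rw [Finset.disjoint_left]
      intro x hxi hxj
      obtain ⟨_, hi1, _⟩ := Finset.mem_filter.mp hxi
      obtain ⟨_, _, hj2⟩ := Finset.mem_filter.mp hxj
      have : 1 / (2:ℝ) ^ (j-1) ≤ 1 / (2:ℝ) ^ i := by
        apply one_div_le_one_div_of_le (by positivity)
        exact pow_le_pow_right₀ (by norm_num) (by omega)
      linarith
    have hdisj : (↑(Finset.Ioc m k) : Set ℕ).PairwiseDisjoint B := by
      intro i _ j _ hij
      rcases lt_or_gt_of_ne hij with h | h
      · exact hdisjgen i j h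
      · exact (hdisjgen j i h).symm
    have hsub : C ⊆ (Finset.Ioc m k).biUnion B := by
      intro x hx
      obtain ⟨i, hi, hxB⟩ := hcover x hx
      exact Finset.mem_biUnion.mpr ⟨i, hi, hxB⟩
    have hCle : ∑ x ∈ C, y x * p x ≤
        ∑ i ∈ Finset.Ioc m k, ∑ x ∈ B i, y x * p x := by
      rw [← Finset.sum_biUnion hdisj]
      apply Finset.sum_le_sum_of_subset_of_nonneg hsub
      intro x hx _
      exact hterm_nonneg x (Finset.mem_filter.mp (Finset.mem_biUnion.mp hx).choose_spec.2).1
    -- pigeonhole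
    have hex : ∃ i ∈ Finset.Ioc m k, OPT / (4 * t) ≤ ∑ x ∈ B i, y x * p x := by
      by_contra hno
      push_neg at hno
      have hbound : ∑ i ∈ Finset.Ioc m k, ∑ x ∈ B i, y x * p x ≤
          ((Finset.Ioc m k).card : ℝ) * (OPT / (4 * t)) := by
        calc ∑ i ∈ Finset.Ioc m k, ∑ x ∈ B i, y x * p x
            ≤ ∑ _i ∈ Finset.Ioc m k, (OPT / (4 * t)) :=
              Finset.sum_le_sum fun i hi => (hno i hi).le
          _ = ((Finset.Ioc m k).card : ℝ) * (OPT / (4 * t)) := by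
              rw [Finset.sum_const, nsmul_eq_mul]
      have hcard : ((Finset.Ioc m k).card : ℝ) ≤ 2 * t := by
        rw [Nat.card_Ioc]
        have : ((k - m : ℕ) : ℝ) = (k:ℝ) - (m:ℝ) := by
          push_cast [Nat.cast_sub hmk.le]; ring
        rw [this]
        have hmR : (2:ℝ) ≤ (m:ℝ) := by exact_mod_cast hm2
        linarith
      have h1 : ((Finset.Ioc m k).card : ℝ) * (OPT / (4 * t)) ≤
          2 * t * (OPT / (4 * t)) := by
        apply mul_le_mul_of_nonneg_right hcard (by positivity)
      have h2 : 2 * t * (OPT / (4 * t)) = OPT / 2 := by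
        field_simp; ring
      linarith
    obtain ⟨i, hiIoc, hige⟩ := hex
    obtain ⟨him, hik⟩ := Finset.mem_Ioc.mp hiIoc
    have hpow_pos : (0:ℝ) < (2:ℝ) ^ (i-1) := by positivity
    have hSp : (2:ℝ) ^ (i-1) * ∑ x ∈ B i, y x * p x ≤ ∑ x ∈ B i, p x := by
      rw [Finset.mul_sum]
      apply Finset.sum_le_sum
      intro x hx
      obtain ⟨hxX, _, hx2⟩ := Finset.mem_filter.mp hx
      have h1 : (2:ℝ) ^ (i-1) * y x ≤ 1 := by
        calc (2:ℝ)^(i-1) * y x ≤ (2:ℝ)^(i-1) * (1 / (2:ℝ)^(i-1)) :=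
            mul_le_mul_of_nonneg_left hx2 hpow_pos.le
          _ = 1 := by field_simp
      nlinarith [hp x hxX, hy_pos x hxX]
    have hge2 : (2:ℝ) ^ (i-1) * (OPT / (4 * t)) ≤ ∑ x ∈ B i, p x := by
      calc (2:ℝ) ^ (i-1) * (OPT / (4 * t))
          ≤ (2:ℝ) ^ (i-1) * ∑ x ∈ B i, y x * p x :=
            mul_le_mul_of_nonneg_left hige hpow_pos.le
        _ ≤ _ := hSp
    have hmono : (2:ℝ) ^ m ≤ (2:ℝ) ^ (i-1) :=
      pow_le_pow_right₀ (by norm_num) (by omega)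
    refine ⟨i, him, hik, ?_, ?_, ?_⟩
    · rw [hBset, finsum_mem_coe_finset]; exact hige
    · rw [hBset, finsum_mem_coe_finset]
      calc (2:ℝ) ^ (i-1) * OPT / (4 * t)
          = (2:ℝ) ^ (i-1) * (OPT / (4 * t)) := by ring
        _ ≤ _ := hge2
    · rw [hBset, finsum_mem_coe_finset]
      have ht2 : t / 2 ≤ (2:ℝ) ^ (i-1) := le_trans (by linarith) hmono
      have h1 : OPT / 8 ≤ (2:ℝ) ^ (i-1) * (OPT / (4 * t)) := by
        calc OPT / 8 = t / 2 * (OPT / (4 * t)) := by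
              field_simp
              ring
          _ ≤ (2:ℝ)^(i-1) * (OPT / (4 * t)) :=
            mul_le_mul_of_nonneg_right ht2 (by positivity)
      linarith [hge2]
end
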